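/- arXiv:2002.00794 — 11 statements merged into one kernel-verified Lean document; each statement's English description precedes it below -/
import Mathlib

section
/- Let 𝒜 be a commutative associative algebra over a field F with char F ≠ 2 and let Δ be a derivation of 𝒜 (a linear map with Δ(ab) = Δ(a)b + aΔ(b)). Define a∘_Δ b = aΔ(b) + bΔ(a). Then (𝒜, ∘_Δ) is a Jordan algebra if and only if Δ(b·a²·Δ²(a)) = 0 for all a, b ∈ 𝒜. -/
/-!
Expanding both sides of the Jordan identity for `a ∘ b = aΔ(b) + bΔ(a)` with the Leibniz rule,
everything cancels except `2Δ(y·x²·Δ²(x))`, and `2` is invertible.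
-/

/-- A Jordan algebra structure: a commutative bilinear multiplication `m`
satisfying the Jordan identity `(x∘x)∘(y∘x) = ((x∘x)∘y)∘x`. -/
structure IsJordanMul (F : Type*) [Field F] {A : Type*} [AddCommGroup A]
    [Module F A] (m : A → A → A) : Prop where
  add_left : ∀ x y z : A, m (x + y) z = m x z + m y z
  smul_left : ∀ (c : F) (x y : A), m (c • x) y = c • m x y
  comm : ∀ x y : A, m x y = m y x
  jordan : ∀ x y : A, m (m x x) (m y x) = m (m (m x x) y) x

def derivMul {R : Type*} [Add R] [Mul R] (Δ : R → R) (a b : R) : R := a * Δ b + b * Δ a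

theorem derivMul_jordan_sub {R G : Type*} [CommRing R] [FunLike G R R] [AddHomClass G R R]
    (Δ : G) (hΔ : ∀ a b : R, Δ (a * b) = Δ a * b + a * Δ b) (x y : R) :
    derivMul Δ (derivMul Δ (derivMul Δ x x) y) x
        - derivMul Δ (derivMul Δ x x) (derivMul Δ y x) =
      2 * Δ (y * (x * x) * Δ (Δ x)) := by
  simp only [derivMul, map_add, hΔ]
  ring

theorem isJordanMul_derivMul_iff {F R : Type*} [Field F] [CommRing R] [Algebra F R]
    (Δ : R →ₗ[F] R) :
    IsJordanMul F (derivMul Δ) ↔ ∀ x y : R,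
      derivMul Δ (derivMul Δ x x) (derivMul Δ y x) =
        derivMul Δ (derivMul Δ (derivMul Δ x x) y) x := by
  refine ⟨IsJordanMul.jordan, fun hjordan => ⟨?_, ?_, ?_, hjordan⟩⟩
  · intro x y z
    simp only [derivMul, map_add]
    ring
  · intro c x y
    simp only [derivMul, map_smul]
    simp only [Algebra.smul_def]
    ring
  · intro x y
    simp only [derivMul]
    ring

/-- for a derivation `Δ` of a commutative associative algebra over a
field of characteristic ≠ 2, `a∘b = aΔ(b) + bΔ(a)` is a Jordan multiplication iff
`Δ(b·a²·Δ²(a)) = 0` for all `a, b`. -/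
theorem stmt2 {F : Type*} [Field F] (h2 : (2 : F) ≠ 0)
    {R : Type*} [CommRing R] [Algebra F R]
    (Δ : R →ₗ[F] R) (hΔ : ∀ a b : R, Δ (a * b) = Δ a * b + a * Δ b) :
    IsJordanMul F (fun a b => a * Δ b + b * Δ a) ↔
      ∀ a b : R, Δ (b * (a * a) * Δ (Δ a)) = 0 := by
  have two_isUnit : IsUnit (2 : R) := by
    simpa only [map_ofNat] using h2.isUnit.map (algebraMap F R)
  change IsJordanMul F (derivMul Δ) ↔ _
  rw [isJordanMul_derivMul_iff]
  refine forall₂_congr fun x y => ?_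
  rw [eq_comm, ← sub_eq_zero, derivMul_jordan_sub Δ hΔ x y,
    two_isUnit.mul_right_eq_zero]
end

section
/- Let 𝒜 be a commutative associative algebra over a field F with char F ≠ 2 and let ω be an involution of 𝒜 (an algebra homomorphism ω : 𝒜 → 𝒜 with ω∘ω = id). Define a∘_ω b = aω(b) + bω(a). Then (𝒜, ∘_ω) is a Jordan algebra if and only if (a − ω(a))(b − ω(b)) = 0 for all a, b ∈ 𝒜. -/
/-!
For `a ∘ b = a ω(b) + b ω(a)`, bilinearity and commutativity are automatic, and since `x ω(x)` is
`ω`-fixed a direct computation shows that the Jordan identity fails exactly by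
`-2 K(x, y)`, where `K(x, y) = x ω(x) (x - ω x)(y - ω y)`. Passing from `x` to `a + 1` or `1 - a`
changes `x - ω x` only by a sign but shifts `x ω(x)` by `1 ± (a + ω a)`, so
`K(a + 1, b) - K(1 - a, b) - 2 K(a, b) = 2 (a - ω a)(b - ω b)`.
-/

section TwistedMul

variable {R G : Type*} [CommRing R] [FunLike G R R]

def twistedMul (ω : G) (a b : R) : R := a * ω b + b * ω a

section RingHomClass

variable [RingHomClass G R R]

theorem twistedMul_jordan_sub (ω : G) (hω : Function.Involutive ω) (x y : R) :
    twistedMul ω (twistedMul ω x x) (twistedMul ω y x)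
        - twistedMul ω (twistedMul ω (twistedMul ω x x) y) x
      = -(2 * (x * ω x * ((x - ω x) * (y - ω y)))) := by
  simp only [twistedMul, map_mul, map_add, hω _]
  ring

theorem two_mul_sub_mul_sub_eq (ω : G) (a b : R) :
    2 * ((a - ω a) * (b - ω b))
      = (a + 1) * ω (a + 1) * ((a + 1 - ω (a + 1)) * (b - ω b))
        - (1 - a) * ω (1 - a) * ((1 - a - ω (1 - a)) * (b - ω b))
        - 2 * (a * ω a * ((a - ω a) * (b - ω b))) := by
  simp only [map_add, map_sub, map_one]
  ring

theorem forall_mul_sub_mul_sub_eq_zero_iff (ω : G) (h2 : IsUnit (2 : R)) :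
    (∀ x y : R, x * ω x * ((x - ω x) * (y - ω y)) = 0) ↔
      ∀ a b : R, (a - ω a) * (b - ω b) = 0 := by
  refine ⟨fun h a b => ?_, fun h x y => by rw [h, mul_zero]⟩
  rw [← h2.mul_right_eq_zero, two_mul_sub_mul_sub_eq, h, h, h]
  ring

end RingHomClass

theorem isJordanMul_twistedMul_iff {F : Type*} [Field F] [Algebra F R] [AlgHomClass G F R R]
    (ω : G) (hω : Function.Involutive ω) :
    IsJordanMul F (twistedMul ω) ↔
      ∀ x y : R, 2 * (x * ω x * ((x - ω x) * (y - ω y))) = 0 := by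
  refine ⟨fun hJ x y => ?_, fun h => ⟨fun x y z => ?_, fun c x y => ?_, fun x y => ?_, fun x y => ?_⟩⟩
  · rw [← neg_eq_zero, ← twistedMul_jordan_sub ω hω, hJ.jordan, sub_self]
  · simp only [twistedMul, map_add]
    ring
  · simp only [twistedMul, map_smul, smul_mul_assoc, mul_smul_comm, smul_add]
  · exact add_comm _ _
  · rw [← sub_eq_zero, twistedMul_jordan_sub ω hω, h, neg_zero]

end TwistedMul

/-- for an involution `ω` of a commutative associative algebra over a
field of characteristic ≠ 2, `a∘b = aω(b) + bω(a)` is a Jordan multiplication iff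
`(a − ω(a))(b − ω(b)) = 0` for all `a, b`. -/
theorem stmt3 {F : Type*} [Field F] (h2 : (2 : F) ≠ 0)
    {R : Type*} [CommRing R] [Algebra F R]
    (ω : R →ₐ[F] R) (hω : ∀ a : R, ω (ω a) = a) :
    IsJordanMul F (fun a b => a * ω b + b * ω a) ↔
      ∀ a b : R, (a - ω a) * (b - ω b) = 0 := by
  have h2R : IsUnit (2 : R) := by simpa only [map_ofNat] using h2.isUnit.map (algebraMap F R)
  change IsJordanMul F (twistedMul ω) ↔ _
  simp only [isJordanMul_twistedMul_iff ω hω, h2R.mul_right_eq_zero]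
  exact forall_mul_sub_mul_sub_eq_zero_iff ω h2R
end

section
/- Let A be a ternary Jordan algebra over a field F and let 𝒜 be a commutative associative F-algebra. On the tensor product Ã = A ⊗ 𝒜 define the trilinear multiplication [[x⊗a, y⊗b, z⊗c]]' = [[x,y,z]] ⊗ (abc). Then (Ã, [[·,·,·]]') is a ternary Jordan algebra. Moreover, if A is perfect (i.e. the span of all [[x,y,z]] equals A) and 𝒜 is unital, then Ã is perfect. -/
/-!
On pure tensors the triple product of `A ⊗ R` is `[[x,y,z]] ⊗ abc`, so the commutator of two
right multiplications by pure tensors acts as `D ⊗ (multiplication by s)`, where `D` is the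
corresponding commutator in `A` and `s` the product of the four scalars. Such an operator is a
derivation of `A ⊗ R` because `D` is one of `A` and `R` is commutative and associative. Every
identity involved is additive in each argument, so it extends from pure tensors to all of
`A ⊗ R`. If `A` is perfect and `e` is an identity of `R`, then `[[x,y,z]] ⊗ a = [[x⊗a, y⊗e, z⊗e]]'`.
-/

/-- A ternary Jordan algebra structure: a totally symmetric trilinear multiplication
`t` on a vector space such that every commutator of right multiplication operators
is a derivation. -/
structure IsTernaryJordan (F : Type*) [Field F] {A : Type*} [AddCommGroup A]
    [Module F A] (t : A → A → A → A) : Prop where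
  add_left : ∀ x y z w : A, t (x + y) z w = t x z w + t y z w
  smul_left : ∀ (c : F) (x y z : A), t (c • x) y z = c • t x y z
  symm12 : ∀ x y z : A, t x y z = t y x z
  symm23 : ∀ x y z : A, t x y z = t x z y
  comm_der : ∀ x₂ x₃ y₂ y₃ a b c : A,
    t (t (t a b c) x₂ x₃) y₂ y₃ - t (t (t a b c) y₂ y₃) x₂ x₃ =
      t (t (t a x₂ x₃) y₂ y₃ - t (t a y₂ y₃) x₂ x₃) b c +
        t a (t (t b x₂ x₃) y₂ y₃ - t (t b y₂ y₃) x₂ x₃) c +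
          t a b (t (t c x₂ x₃) y₂ y₃ - t (t c y₂ y₃) x₂ x₃)

open scoped TensorProduct

namespace TensorProduct

variable {F M N : Type*} [CommSemiring F] [AddCommMonoid M] [AddCommMonoid N] [Module F M]
  [Module F N]

@[elab_as_elim]
theorem induction_on_tmul_add {motive : M ⊗[F] N → Prop} (z : M ⊗[F] N)
    (tmul : ∀ x y, motive (x ⊗ₜ[F] y)) (add : ∀ x y, motive x → motive y → motive (x + y)) :
    motive z := by
  induction z with
  | zero => simpa using tmul 0 0
  | tmul x y => exact tmul x y
  | add x y hx hy => exact add x y hx hy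

end TensorProduct

structure IsTriadditive {X Y : Type*} [Add X] [Add Y] (t : X → X → X → Y) : Prop where
  add_left : ∀ p q r s, t (p + q) r s = t p r s + t q r s
  add_mid : ∀ p q r s, t p (q + r) s = t p q s + t p r s
  add_right : ∀ p q r s, t p q (r + s) = t p q r + t p q s

def IsTernaryDerivation {X : Type*} [Add X] (t : X → X → X → X) (D : X → X) : Prop :=
  ∀ a b c, D (t a b c) = t (D a) b c + t a (D b) c + t a b (D c)

/-- `rmulComm t x₂ x₃ y₂ y₃` is the commutator `[R_(y₂,y₃), R_(x₂,x₃)]`, so that the last field of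
`IsTernaryJordan` says exactly that it is a derivation. -/
def rmulComm {X : Type*} [Sub X] (t : X → X → X → X) (x₂ x₃ y₂ y₃ a : X) : X :=
  t (t a x₂ x₃) y₂ y₃ - t (t a y₂ y₃) x₂ x₃

namespace IsTriadditive

section Add

variable {X Y : Type*} [Add X] [Add Y] {t : X → X → X → Y}

theorem swap12 (ht : IsTriadditive t) : IsTriadditive fun p q r => t q p r :=
  ⟨fun p q r s => ht.add_mid r p q s, fun p q r s => ht.add_left q r p s,
    fun p q r s => ht.add_right q p r s⟩

theorem swap23 (ht : IsTriadditive t) : IsTriadditive fun p q r => t p r q :=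
  ⟨fun p q r s => ht.add_left p q s r, fun p q r s => ht.add_right p s q r,
    fun p q r s => ht.add_mid p r s q⟩

end Add

section AddCommMonoid

variable {X : Type*} [AddCommMonoid X] {t : X → X → X → X}

theorem isTernaryDerivation_add (ht : IsTriadditive t) {D₁ D₂ : X → X}
    (h₁ : IsTernaryDerivation t D₁) (h₂ : IsTernaryDerivation t D₂) :
    IsTernaryDerivation t (D₁ + D₂) := by
  intro a b c
  simp only [Pi.add_apply, ht.add_left, ht.add_mid, ht.add_right, h₁ a b c, h₂ a b c]
  abel

end AddCommMonoid

section AddCommGroup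

variable {X : Type*} [AddCommGroup X] {t : X → X → X → X}

theorem rmulComm_add_apply (ht : IsTriadditive t) (x₂ x₃ y₂ y₃ a b : X) :
    rmulComm t x₂ x₃ y₂ y₃ (a + b) = rmulComm t x₂ x₃ y₂ y₃ a + rmulComm t x₂ x₃ y₂ y₃ b := by
  simp only [rmulComm, ht.add_left]
  abel

theorem rmulComm_add₁ (ht : IsTriadditive t) (x₂ x₂' x₃ y₂ y₃ : X) :
    rmulComm t (x₂ + x₂') x₃ y₂ y₃ = rmulComm t x₂ x₃ y₂ y₃ + rmulComm t x₂' x₃ y₂ y₃ := by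
  funext a
  simp only [rmulComm, Pi.add_apply, ht.add_left, ht.add_mid]
  abel

theorem rmulComm_add₂ (ht : IsTriadditive t) (x₂ x₃ x₃' y₂ y₃ : X) :
    rmulComm t x₂ (x₃ + x₃') y₂ y₃ = rmulComm t x₂ x₃ y₂ y₃ + rmulComm t x₂ x₃' y₂ y₃ := by
  funext a
  simp only [rmulComm, Pi.add_apply, ht.add_left, ht.add_right]
  abel

theorem rmulComm_add₃ (ht : IsTriadditive t) (x₂ x₃ y₂ y₂' y₃ : X) :
    rmulComm t x₂ x₃ (y₂ + y₂') y₃ = rmulComm t x₂ x₃ y₂ y₃ + rmulComm t x₂ x₃ y₂' y₃ := by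
  funext a
  simp only [rmulComm, Pi.add_apply, ht.add_left, ht.add_mid]
  abel

theorem rmulComm_add₄ (ht : IsTriadditive t) (x₂ x₃ y₂ y₃ y₃' : X) :
    rmulComm t x₂ x₃ y₂ (y₃ + y₃') = rmulComm t x₂ x₃ y₂ y₃ + rmulComm t x₂ x₃ y₂ y₃' := by
  funext a
  simp only [rmulComm, Pi.add_apply, ht.add_left, ht.add_right]
  abel

end AddCommGroup

section Tensor

variable {F M N Y : Type*} [CommSemiring F] [AddCommMonoid M] [AddCommMonoid N] [Module F M]
  [Module F N] [Add Y]

theorem ext_tmul {t s : M ⊗[F] N → M ⊗[F] N → M ⊗[F] N → Y} (ht : IsTriadditive t)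
    (hs : IsTriadditive s)
    (h : ∀ x y z a b c, t (x ⊗ₜ a) (y ⊗ₜ b) (z ⊗ₜ c) = s (x ⊗ₜ a) (y ⊗ₜ b) (z ⊗ₜ c)) :
    t = s := by
  funext p q r
  induction p using TensorProduct.induction_on_tmul_add with
  | add p₁ p₂ h₁ h₂ => rw [ht.add_left, hs.add_left, h₁, h₂]
  | tmul x a =>
    induction q using TensorProduct.induction_on_tmul_add with
    | add q₁ q₂ h₁ h₂ => rw [ht.add_mid, hs.add_mid, h₁, h₂]
    | tmul y b =>
      induction r using TensorProduct.induction_on_tmul_add with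
      | add r₁ r₂ h₁ h₂ => rw [ht.add_right, hs.add_right, h₁, h₂]
      | tmul z c => exact h x y z a b c

theorem isTernaryDerivation_of_tmul {t : M ⊗[F] N → M ⊗[F] N → M ⊗[F] N → M ⊗[F] N}
    (ht : IsTriadditive t) {D : M ⊗[F] N → M ⊗[F] N} (hD : ∀ p q, D (p + q) = D p + D q)
    (h : ∀ x y z a b c, D (t (x ⊗ₜ a) (y ⊗ₜ b) (z ⊗ₜ c)) =
      t (D (x ⊗ₜ a)) (y ⊗ₜ b) (z ⊗ₜ c) + t (x ⊗ₜ a) (D (y ⊗ₜ b)) (z ⊗ₜ c) +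
        t (x ⊗ₜ a) (y ⊗ₜ b) (D (z ⊗ₜ c))) :
    IsTernaryDerivation t D := by
  have hDt : IsTriadditive fun p q r => D (t p q r) := by
    constructor <;> intros <;> simp only [ht.add_left, ht.add_mid, ht.add_right, hD]
  have hLeibniz : IsTriadditive fun p q r => t (D p) q r + t p (D q) r + t p q (D r) := by
    constructor <;> intros <;> simp only [ht.add_left, ht.add_mid, ht.add_right, hD] <;> abel
  exact congr_fun₃ (ext_tmul hDt hLeibniz h)

end Tensor

end IsTriadditive

section TensorExtension

variable {F A R : Type*} [CommSemiring F] [AddCommGroup A] [Module F A]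
  [NonUnitalCommSemiring R] [Module F R] {t : A → A → A → A}
  {t' : A ⊗[F] R → A ⊗[F] R → A ⊗[F] R → A ⊗[F] R}

variable (t t') in
abbrev IsTensorTripleProduct : Prop :=
  ∀ x y z a b c, t' (x ⊗ₜ a) (y ⊗ₜ b) (z ⊗ₜ c) = t x y z ⊗ₜ (a * b * c)

theorem symm12_of_tmul (ht' : IsTriadditive t')
    (hpure : IsTensorTripleProduct t t')
    (h12 : ∀ x y z, t x y z = t y x z) (p q r : A ⊗[F] R) : t' p q r = t' q p r :=
  congr_fun₃ (ht'.ext_tmul ht'.swap12 fun x y z a b c => by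
    rw [hpure, hpure, h12, mul_comm a b]) p q r

theorem symm23_of_tmul (ht' : IsTriadditive t')
    (hpure : IsTensorTripleProduct t t')
    (h23 : ∀ x y z, t x y z = t x z y) (p q r : A ⊗[F] R) : t' p q r = t' p r q :=
  congr_fun₃ (ht'.ext_tmul ht'.swap23 fun x y z a b c => by
    rw [hpure, hpure, h23, mul_right_comm a b c]) p q r

theorem rmulComm_tmul (hpure : IsTensorTripleProduct t t')
    (x₂ x₃ y₂ y₃ a : A) (p₂ p₃ q₂ q₃ α : R) :
    rmulComm t' (x₂ ⊗ₜ p₂) (x₃ ⊗ₜ p₃) (y₂ ⊗ₜ q₂) (y₃ ⊗ₜ q₃) (a ⊗ₜ α) =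
      rmulComm t x₂ x₃ y₂ y₃ a ⊗ₜ (p₂ * p₃ * q₂ * q₃ * α) := by
  simp only [rmulComm, hpure, TensorProduct.sub_tmul]
  congr 2 <;> ac_rfl

theorem isTernaryDerivation_tensor (ht' : IsTriadditive t')
    (hpure : IsTensorTripleProduct t t')
    {D : A → A} (hD : IsTernaryDerivation t D) (s : R) {D' : A ⊗[F] R → A ⊗[F] R}
    (hD'add : ∀ p q, D' (p + q) = D' p + D' q) (hD' : ∀ x α, D' (x ⊗ₜ α) = D x ⊗ₜ (s * α)) :
    IsTernaryDerivation t' D' := by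
  refine ht'.isTernaryDerivation_of_tmul hD'add fun x y z a b c => ?_
  rw [hpure, hD', hD', hD', hD', hpure, hpure, hpure, hD x y z, TensorProduct.add_tmul,
    TensorProduct.add_tmul]
  ac_nf

theorem isTernaryDerivation_rmulComm_tensor (ht' : IsTriadditive t')
    (hpure : IsTensorTripleProduct t t')
    (hder : ∀ x₂ x₃ y₂ y₃, IsTernaryDerivation t (rmulComm t x₂ x₃ y₂ y₃))
    (x₂ x₃ y₂ y₃ : A ⊗[F] R) : IsTernaryDerivation t' (rmulComm t' x₂ x₃ y₂ y₃) := by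
  induction x₂ using TensorProduct.induction_on_tmul_add with
  | add u v hu hv => rw [ht'.rmulComm_add₁]; exact ht'.isTernaryDerivation_add hu hv
  | tmul x₂ p₂ =>
    induction x₃ using TensorProduct.induction_on_tmul_add with
    | add u v hu hv => rw [ht'.rmulComm_add₂]; exact ht'.isTernaryDerivation_add hu hv
    | tmul x₃ p₃ =>
      induction y₂ using TensorProduct.induction_on_tmul_add with
      | add u v hu hv => rw [ht'.rmulComm_add₃]; exact ht'.isTernaryDerivation_add hu hv
      | tmul y₂ q₂ =>
        induction y₃ using TensorProduct.induction_on_tmul_add with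
        | add u v hu hv => rw [ht'.rmulComm_add₄]; exact ht'.isTernaryDerivation_add hu hv
        | tmul y₃ q₃ =>
          exact isTernaryDerivation_tensor ht' hpure (hder x₂ x₃ y₂ y₃) (p₂ * p₃ * q₂ * q₃)
            (ht'.rmulComm_add_apply _ _ _ _) (rmulComm_tmul hpure x₂ x₃ y₂ y₃ · p₂ p₃ q₂ q₃ ·)

theorem span_tensor_eq_top (hpure : IsTensorTripleProduct t t')
    (hA : Submodule.span F {w : A | ∃ x y z, w = t x y z} = ⊤) {e : R} (he : ∀ a, e * a = a) :
    Submodule.span F {w : A ⊗[F] R | ∃ p q r, w = t' p q r} = ⊤ := by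
  refine Submodule.eq_top_iff'.2 fun w => ?_
  induction w using TensorProduct.induction_on_tmul_add with
  | add p q hp hq => exact add_mem hp hq
  | tmul x a =>
    have hmap : (Submodule.span F {w : A | ∃ x y z, w = t x y z}).map
        ((TensorProduct.mk F A R).flip a) ≤ Submodule.span F {w | ∃ p q r, w = t' p q r} := by
      refine (Submodule.map_span_le _ _ _).2 ?_
      rintro _ ⟨x, y, z, rfl⟩
      refine Submodule.subset_span ⟨x ⊗ₜ a, y ⊗ₜ e, z ⊗ₜ e, ?_⟩
      rw [hpure, mul_assoc, he, mul_comm, he]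
      rfl
    exact hmap ⟨x, hA ▸ Submodule.mem_top, rfl⟩

end TensorExtension

theorem stmt4_general {F : Type*} [Field F] {A : Type*} [AddCommGroup A] [Module F A]
    (t : A → A → A → A) (ht : IsTernaryJordan F t)
    {R : Type*} [NonUnitalCommRing R] [Module F R]
    (t' : A ⊗[F] R → A ⊗[F] R → A ⊗[F] R → A ⊗[F] R)
    (h_addl : ∀ p q r s, t' (p + q) r s = t' p r s + t' q r s)
    (h_addm : ∀ p q r s, t' p (q + r) s = t' p q s + t' p r s)
    (h_addr : ∀ p q r s, t' p q (r + s) = t' p q r + t' p q s)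
    (h_smull : ∀ (c : F) (p q r), t' (c • p) q r = c • t' p q r)
    (h_pure : ∀ (x y z : A) (a b c : R),
      t' (x ⊗ₜ[F] a) (y ⊗ₜ[F] b) (z ⊗ₜ[F] c) = t x y z ⊗ₜ[F] (a * b * c)) :
    IsTernaryJordan F t' ∧
      (Submodule.span F {w : A | ∃ x y z : A, w = t x y z} = ⊤ →
        (∃ e : R, ∀ a : R, e * a = a) →
        Submodule.span F {w : A ⊗[F] R | ∃ p q r, w = t' p q r} = ⊤) := by
  have ht' : IsTriadditive t' := ⟨h_addl, h_addm, h_addr⟩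
  refine ⟨⟨h_addl, h_smull, symm12_of_tmul ht' h_pure ht.symm12,
    symm23_of_tmul ht' h_pure ht.symm23,
    isTernaryDerivation_rmulComm_tensor ht' h_pure ht.comm_der⟩,
    fun hA ⟨e, he⟩ => span_tensor_eq_top h_pure hA he⟩

/-- the tensor product of a ternary Jordan algebra with a commutative
associative algebra, with `[[x⊗a,y⊗b,z⊗c]]' = [[x,y,z]]⊗(abc)`, is a ternary Jordan
algebra; it is perfect when `A` is perfect and the associative algebra is unital. -/
theorem stmt4 {F : Type*} [Field F] {A : Type*} [AddCommGroup A] [Module F A]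
    (t : A → A → A → A) (ht : IsTernaryJordan F t)
    {R : Type*} [NonUnitalCommRing R] [Module F R] [SMulCommClass F R R]
    [IsScalarTower F R R]
    (t' : A ⊗[F] R → A ⊗[F] R → A ⊗[F] R → A ⊗[F] R)
    (h_addl : ∀ p q r s, t' (p + q) r s = t' p r s + t' q r s)
    (h_addm : ∀ p q r s, t' p (q + r) s = t' p q s + t' p r s)
    (h_addr : ∀ p q r s, t' p q (r + s) = t' p q r + t' p q s)
    (h_smull : ∀ (c : F) (p q r), t' (c • p) q r = c • t' p q r)
    (h_smulm : ∀ (c : F) (p q r), t' p (c • q) r = c • t' p q r)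
    (h_smulr : ∀ (c : F) (p q r), t' p q (c • r) = c • t' p q r)
    (h_pure : ∀ (x y z : A) (a b c : R),
      t' (x ⊗ₜ[F] a) (y ⊗ₜ[F] b) (z ⊗ₜ[F] c) = t x y z ⊗ₜ[F] (a * b * c)) :
    IsTernaryJordan F t' ∧
      (Submodule.span F {w : A | ∃ x y z : A, w = t x y z} = ⊤ →
        (∃ e : R, ∀ a : R, e * a = a) →
        Submodule.span F {w : A ⊗[F] R | ∃ p q r, w = t' p q r} = ⊤) :=
  stmt4_general t ht t' h_addl h_addm h_addr h_smull h_pure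
end

section
/- Let A be a ternary Jordan algebra over a field F with char F ≠ 2, 3. Then GDer(A), QDer(A), QΓ(A) and Γ(A) are Lie subalgebras of the general linear Lie algebra gl(A): each is a linear subspace of End(A) closed under the commutator bracket [f,g] = f∘g − g∘f. -/
/-- A generalized derivation of the ternary algebra `(A, t)`. -/
def IsGDer (F : Type*) [Field F] {A : Type*} [AddCommGroup A] [Module F A]
    (t : A → A → A → A) (f₁ : A →ₗ[F] A) : Prop :=
  ∃ f₂ f₃ f' : A →ₗ[F] A, ∀ x y z : A,
    t (f₁ x) y z + t x (f₂ y) z + t x y (f₃ z) = f' (t x y z)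
/-- A quasiderivation of the ternary algebra `(A, t)`. -/
def IsQDer (F : Type*) [Field F] {A : Type*} [AddCommGroup A] [Module F A]
    (t : A → A → A → A) (f : A →ₗ[F] A) : Prop :=
  ∃ f' : A →ₗ[F] A, ∀ x y z : A,
    t (f x) y z + t x (f y) z + t x y (f z) = f' (t x y z)
/-- Membership in the centroid of the ternary algebra `(A, t)`. -/
def IsCent (F : Type*) [Field F] {A : Type*} [AddCommGroup A] [Module F A]
    (t : A → A → A → A) (f : A →ₗ[F] A) : Prop :=
  ∀ x y z : A, t (f x) y z = t x (f y) z ∧ t x (f y) z = t x y (f z) ∧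
    t x y (f z) = f (t x y z)
/-- Membership in the quasicentroid of the ternary algebra `(A, t)`. -/
def IsQCent (F : Type*) [Field F] {A : Type*} [AddCommGroup A] [Module F A]
    (t : A → A → A → A) (f : A →ₗ[F] A) : Prop :=
  ∀ x y z : A, t (f x) y z = t x (f y) z ∧ t x (f y) z = t x y (f z)

/-- A set `S` of linear endomorphisms is a Lie subalgebra of `gl(A)`: it is a linear
subspace of `End(A)` closed under the commutator bracket. -/
def IsLieSubalgebraOfEnd (F : Type*) [Field F] {A : Type*} [AddCommGroup A]
    [Module F A] (S : (A →ₗ[F] A) → Prop) : Prop :=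
  S 0 ∧ (∀ f g, S f → S g → S (f + g)) ∧ (∀ (c : F) (f), S f → S (c • f)) ∧
    ∀ f g, S f → S g → S (f ∘ₗ g - g ∘ₗ f)

/-!
All four spaces are closed under linear combinations because their defining identities are
linear in the maps involved. For (generalized) quasiderivations, expanding `f' (g' [[x,y,z]])`
with the identity for `g` and then for `f` gives nine terms; the six mixed ones cancel in the
commutator. For the quasicentroid, if `f, g ∈ QΓ(A)` then `u(x,y,z) = [[[f,g] x, y, z]]` is
antisymmetric in its first two arguments and symmetric in its last two, so `u = -u` and hence
`u = 0` when `char F ≠ 2`; the centroid then follows since `[f,g] [[x,y,z]] = [[x,y,[f,g] z]]`.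
-/

namespace IsTernaryJordan

variable {F : Type*} [Field F] {A : Type*} [AddCommGroup A] [Module F A]
  {t : A → A → A → A}

lemma add_mid (ht : IsTernaryJordan F t) (x y y' z : A) :
    t x (y + y') z = t x y z + t x y' z := by
  rw [ht.symm12, ht.add_left, ht.symm12 y, ht.symm12 y']

lemma smul_mid (ht : IsTernaryJordan F t) (c : F) (x y z : A) :
    t x (c • y) z = c • t x y z := by
  rw [ht.symm12, ht.smul_left, ht.symm12 y]

lemma add_right (ht : IsTernaryJordan F t) (x y z z' : A) :
    t x y (z + z') = t x y z + t x y z' := by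
  rw [ht.symm23, ht.add_mid, ht.symm23 x z, ht.symm23 x z']

lemma smul_right (ht : IsTernaryJordan F t) (c : F) (x y z : A) :
    t x y (c • z) = c • t x y z := by
  rw [ht.symm23, ht.smul_mid, ht.symm23 x z]

lemma exists_trilinear (ht : IsTernaryJordan F t) :
    ∃ T : A →ₗ[F] A →ₗ[F] A →ₗ[F] A, t = fun x y z => T x y z :=
  ⟨{ toFun := fun x =>
        LinearMap.mk₂ F (t x) (ht.add_mid x) (fun c => ht.smul_mid c x) (ht.add_right x)
          (fun c => ht.smul_right c x)
     map_add' := fun x x' => by ext y z; exact ht.add_left x x' y z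
     map_smul' := fun c x => by ext y z; exact ht.smul_left c x y z }, rfl⟩

end IsTernaryJordan

lemma IsCent.isQCent {F : Type*} [Field F] {A : Type*} [AddCommGroup A] [Module F A]
    {t : A → A → A → A} {f : A →ₗ[F] A} (hf : IsCent F t f) : IsQCent F t f :=
  fun x y z => ⟨(hf x y z).1, (hf x y z).2.1⟩

theorem eq_zero_of_antisymm_of_symm {F α M : Type*} [Field F] [AddCommGroup M] [Module F M]
    (h2 : (2 : F) ≠ 0) {u : α → α → α → M} (hanti : ∀ a b c, u a b c = -u b a c)
    (hsymm : ∀ a b c, u a b c = u a c b) (a b c : α) : u a b c = 0 := by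
  have hneg : u a b c = -u a b c :=
    calc u a b c = -u b c a := by rw [hanti, hsymm]
      _ = u c b a := by rw [hanti b, neg_neg]
      _ = -u a b c := by rw [hsymm, hanti, hsymm]
  have h2u : (2 : F) • u a b c = 0 := by
    rw [two_smul]; nth_rewrite 2 [hneg]; exact add_neg_cancel _
  exact (smul_eq_zero.mp h2u).resolve_left h2

section Trilinear

variable {F : Type*} [Field F] {A : Type*} [AddCommGroup A] [Module F A]
  {T : A →ₗ[F] A →ₗ[F] A →ₗ[F] A}

variable (T) in
def IsGDerQuadruple (f₁ f₂ f₃ f' : A →ₗ[F] A) : Prop :=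
  ∀ x y z : A, T (f₁ x) y z + T x (f₂ y) z + T x y (f₃ z) = f' (T x y z)

namespace IsGDerQuadruple

variable {f₁ f₂ f₃ f' g₁ g₂ g₃ g' : A →ₗ[F] A}

variable (T) in
lemma zero : IsGDerQuadruple T 0 0 0 0 := fun x y z => by simp

lemma add (hf : IsGDerQuadruple T f₁ f₂ f₃ f') (hg : IsGDerQuadruple T g₁ g₂ g₃ g') :
    IsGDerQuadruple T (f₁ + g₁) (f₂ + g₂) (f₃ + g₃) (f' + g') := fun x y z => by
  simp only [LinearMap.add_apply, map_add, ← hf x y z, ← hg x y z]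
  abel

lemma smul (c : F) (hf : IsGDerQuadruple T f₁ f₂ f₃ f') :
    IsGDerQuadruple T (c • f₁) (c • f₂) (c • f₃) (c • f') := fun x y z => by
  simp only [LinearMap.smul_apply, map_smul, ← hf x y z, smul_add]

lemma commutator (hf : IsGDerQuadruple T f₁ f₂ f₃ f') (hg : IsGDerQuadruple T g₁ g₂ g₃ g') :
    IsGDerQuadruple T (f₁ ∘ₗ g₁ - g₁ ∘ₗ f₁) (f₂ ∘ₗ g₂ - g₂ ∘ₗ f₂) (f₃ ∘ₗ g₃ - g₃ ∘ₗ f₃)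
      (f' ∘ₗ g' - g' ∘ₗ f') := fun x y z => by
  simp only [LinearMap.sub_apply, LinearMap.comp_apply, map_sub, ← hf _ _ _, ← hg _ _ _, map_add]
  abel

end IsGDerQuadruple

variable (T) in
theorem isLieSubalgebraOfEnd_isGDer : IsLieSubalgebraOfEnd F (IsGDer F fun x y z => T x y z) :=
  ⟨⟨0, 0, 0, IsGDerQuadruple.zero T⟩,
    fun _ _ ⟨f₂, f₃, f', hf⟩ ⟨g₂, g₃, g', hg⟩ =>
      ⟨f₂ + g₂, f₃ + g₃, f' + g', IsGDerQuadruple.add (T := T) hf hg⟩,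
    fun c _ ⟨f₂, f₃, f', hf⟩ => ⟨c • f₂, c • f₃, c • f', IsGDerQuadruple.smul (T := T) c hf⟩,
    fun _ _ ⟨_, _, _, hf⟩ ⟨_, _, _, hg⟩ =>
      ⟨_, _, _, IsGDerQuadruple.commutator (T := T) hf hg⟩⟩

variable (T) in
theorem isLieSubalgebraOfEnd_isQDer : IsLieSubalgebraOfEnd F (IsQDer F fun x y z => T x y z) :=
  ⟨⟨0, IsGDerQuadruple.zero T⟩,
    fun _ _ ⟨f', hf⟩ ⟨g', hg⟩ => ⟨f' + g', IsGDerQuadruple.add (T := T) hf hg⟩,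
    fun c _ ⟨f', hf⟩ => ⟨c • f', IsGDerQuadruple.smul (T := T) c hf⟩,
    fun _ _ ⟨_, hf⟩ ⟨_, hg⟩ => ⟨_, IsGDerQuadruple.commutator (T := T) hf hg⟩⟩

variable (h12 : ∀ x y z, T x y z = T y x z) (h23 : ∀ x y z, T x y z = T x z y)
include h12 h23

lemma commutator_apply_eq_zero (h2 : (2 : F) ≠ 0) {f g : A →ₗ[F] A}
    (hf : IsQCent F (fun x y z => T x y z) f) (hg : IsQCent F (fun x y z => T x y z) g)
    (x y z : A) :
    T ((f ∘ₗ g - g ∘ₗ f) x) y z = 0 ∧ T x ((f ∘ₗ g - g ∘ₗ f) y) z = 0 ∧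
      T x y ((f ∘ₗ g - g ∘ₗ f) z) = 0 := by
  have hswap : ∀ p q : A →ₗ[F] A, IsQCent F (fun x y z => T x y z) p →
      IsQCent F (fun x y z => T x y z) q → ∀ a b c, T (p (q a)) b c = T (q (p b)) a c :=
    fun p q hp hq a b c => ((hp _ b c).1.trans (hq a _ c).1).trans (h12 _ _ _)
  have hleft : ∀ x y z, T ((f ∘ₗ g - g ∘ₗ f) x) y z = 0 := fun x y z => by
    simp only [LinearMap.sub_apply, LinearMap.comp_apply, map_sub]
    refine eq_zero_of_antisymm_of_symm (u := fun a b c => T (f (g a)) b c - T (g (f a)) b c)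
      h2 (fun a b c => ?_) (fun a b c => congrArg₂ (· - ·) (h23 ..) (h23 ..)) x y z
    rw [hswap f g hf hg a b c, hswap g f hg hf a b c, neg_sub]
  exact ⟨hleft x y z, h12 x _ z ▸ hleft y x z, h23 x y _ ▸ h12 x _ y ▸ hleft z x y⟩

theorem isLieSubalgebraOfEnd_isQCent (h2 : (2 : F) ≠ 0) :
    IsLieSubalgebraOfEnd F (IsQCent F fun x y z => T x y z) := by
  refine ⟨fun x y z => by simp, fun f g hf hg x y z => ?_, fun c f hf x y z => ?_,
    fun f g hf hg x y z => ?_⟩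
  · simp [hf x y z, hg x y z]
  · simp [hf x y z]
  · obtain ⟨hl, hm, hr⟩ := commutator_apply_eq_zero h12 h23 h2 hf hg x y z
    exact ⟨hl.trans hm.symm, hm.trans hr.symm⟩

theorem isLieSubalgebraOfEnd_isCent (h2 : (2 : F) ≠ 0) :
    IsLieSubalgebraOfEnd F (IsCent F fun x y z => T x y z) := by
  refine ⟨fun x y z => by simp, fun f g hf hg x y z => ?_, fun c f hf x y z => ?_,
    fun f g hf hg x y z => ?_⟩
  · simp [hf x y z, hg x y z]
  · simp [hf x y z]
  · have hright : (f ∘ₗ g - g ∘ₗ f) (T x y z) = T x y ((f ∘ₗ g - g ∘ₗ f) z) := by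
      simp [← (hf _ _ _).2.2, ← (hg _ _ _).2.2]
    obtain ⟨hl, hm, hr⟩ := commutator_apply_eq_zero h12 h23 h2 hf.isQCent hg.isQCent x y z
    exact ⟨hl.trans hm.symm, hm.trans hr.symm, hr.trans (hright.trans hr).symm⟩

end Trilinear

theorem stmt5_general {F : Type*} [Field F] {A : Type*} [AddCommGroup A] [Module F A]
    (h2 : (2 : F) ≠ 0)
    (t : A → A → A → A) (ht : IsTernaryJordan F t) :
    IsLieSubalgebraOfEnd F (IsGDer F t) ∧ IsLieSubalgebraOfEnd F (IsQDer F t) ∧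
      IsLieSubalgebraOfEnd F (IsQCent F t) ∧ IsLieSubalgebraOfEnd F (IsCent F t) := by
  obtain ⟨T, rfl⟩ := ht.exists_trilinear
  exact ⟨isLieSubalgebraOfEnd_isGDer T, isLieSubalgebraOfEnd_isQDer T,
    isLieSubalgebraOfEnd_isQCent ht.symm12 ht.symm23 h2,
    isLieSubalgebraOfEnd_isCent ht.symm12 ht.symm23 h2⟩

/-- `GDer(A)`, `QDer(A)`, `QΓ(A)` and `Γ(A)` are Lie subalgebras of
`gl(A)`. -/
theorem stmt5 {F : Type*} [Field F] {A : Type*} [AddCommGroup A] [Module F A]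
    (h2 : (2 : F) ≠ 0) (h3 : (3 : F) ≠ 0)
    (t : A → A → A → A) (ht : IsTernaryJordan F t) :
    IsLieSubalgebraOfEnd F (IsGDer F t) ∧ IsLieSubalgebraOfEnd F (IsQDer F t) ∧
      IsLieSubalgebraOfEnd F (IsQCent F t) ∧ IsLieSubalgebraOfEnd F (IsCent F t) :=
  stmt5_general h2 t ht
end

section
/- Let A be a ternary Jordan algebra over a field F with char F ≠ 2, 3. Then GDer(A) = QDer(A) + QΓ(A): every generalized derivation of A is the sum of a quasiderivation and an element of the quasicentroid, and conversely every such sum is a generalized derivation. -/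
/-
Adding elements `g₁, g₂, g₃` of the quasicentroid with `g₁ + g₂ + g₃ = 0` to the three maps
`f₁, f₂, f₃` of a generalized derivation preserves its defining identity, since all three can
be moved into the first argument. Swapping two arguments of the identity shows that
`f₁ - f₂` and `f₁ - f₃` lie in the quasicentroid, so the three maps can all be shifted to their
mean `(f₁ + f₂ + f₃) / 3`, which is therefore a quasiderivation. Conversely, for a
quasiderivation `q` and `h` in the quasicentroid, `q + h` comes with the maps `q - h` and `q`.
-/

structure IsSymmTrilinear (F : Type*) [Field F] {A : Type*} [AddCommGroup A] [Module F A]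
    (t : A → A → A → A) : Prop where
  add_left : ∀ x y z w : A, t (x + y) z w = t x z w + t y z w
  smul_left : ∀ (c : F) (x y z : A), t (c • x) y z = c • t x y z
  symm12 : ∀ x y z : A, t x y z = t y x z
  symm23 : ∀ x y z : A, t x y z = t x z y

theorem IsTernaryJordan.isSymmTrilinear {F : Type*} [Field F] {A : Type*} [AddCommGroup A]
    [Module F A] {t : A → A → A → A} (ht : IsTernaryJordan F t) : IsSymmTrilinear F t :=
  ⟨ht.add_left, ht.smul_left, ht.symm12, ht.symm23⟩

def IsGDerWith {F : Type*} [Field F] {A : Type*} [AddCommGroup A] [Module F A]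
    (t : A → A → A → A) (f₁ f₂ f₃ f' : A →ₗ[F] A) : Prop :=
  ∀ x y z : A, t (f₁ x) y z + t x (f₂ y) z + t x y (f₃ z) = f' (t x y z)

namespace IsSymmTrilinear

variable {F : Type*} [Field F] {A : Type*} [AddCommGroup A] [Module F A]
  {t : A → A → A → A} (hs : IsSymmTrilinear F t)
include hs

theorem add_mid (x y z w : A) : t x (y + z) w = t x y w + t x z w := by
  rw [hs.symm12, hs.add_left, hs.symm12 y, hs.symm12 z]

theorem add_right (x y z w : A) : t x y (z + w) = t x y z + t x y w := by
  rw [hs.symm23, hs.add_mid, hs.symm23 x z, hs.symm23 x w]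

theorem smul_mid (c : F) (x y z : A) : t x (c • y) z = c • t x y z := by
  rw [hs.symm12, hs.smul_left, hs.symm12]

theorem symm13 (x y z : A) : t x y z = t z y x := by
  rw [hs.symm12, hs.symm23, hs.symm12]

theorem zero_left (y z : A) : t 0 y z = 0 := by
  simpa using hs.smul_left 0 0 y z

theorem sub_left (x y z w : A) : t (x - y) z w = t x z w - t y z w := by
  rw [eq_sub_iff_add_eq, ← hs.add_left, sub_add_cancel]

theorem sub_mid (x y z w : A) : t x (y - z) w = t x y w - t x z w := by
  rw [hs.symm12, hs.sub_left, hs.symm12 y, hs.symm12 z]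

theorem isQCent_iff {g : A →ₗ[F] A} :
    IsQCent F t g ↔ ∀ x y z : A, t (g x) y z = t x (g y) z := by
  refine ⟨fun hg x y z => (hg x y z).1, fun hg x y z => ⟨hg x y z, ?_⟩⟩
  rw [hs.symm13 x, ← hg, hs.symm13]

def quasicentroid : Submodule F (A →ₗ[F] A) where
  carrier := {g | IsQCent F t g}
  add_mem' {g h} hg hh := hs.isQCent_iff.2 fun x y z => by
    simp only [LinearMap.add_apply, hs.add_left, hs.add_mid,
      (hs.isQCent_iff.1 hg), (hs.isQCent_iff.1 hh)]
  zero_mem' := hs.isQCent_iff.2 fun x y z => by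
    simp only [LinearMap.zero_apply, hs.zero_left, hs.symm12 x 0]
  smul_mem' c g hg := hs.isQCent_iff.2 fun x y z => by
    simp only [LinearMap.smul_apply, hs.smul_left, hs.smul_mid, hs.isQCent_iff.1 hg]

theorem slot_sum_eq_left (g₁ : A →ₗ[F] A) {g₂ g₃ : A →ₗ[F] A}
    (h₂ : g₂ ∈ hs.quasicentroid) (h₃ : g₃ ∈ hs.quasicentroid) (x y z : A) :
    t (g₁ x) y z + t x (g₂ y) z + t x y (g₃ z) = t ((g₁ + g₂ + g₃) x) y z := by
  rw [← (h₃ x y z).2, ← (h₃ x y z).1, ← (h₂ x y z).1]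
  simp only [LinearMap.add_apply, hs.add_left]

theorem isGDerWith_add {f₁ f₂ f₃ f' g₁ g₂ g₃ : A →ₗ[F] A} (hf : IsGDerWith t f₁ f₂ f₃ f')
    (h₂ : g₂ ∈ hs.quasicentroid) (h₃ : g₃ ∈ hs.quasicentroid) (hsum : g₁ + g₂ + g₃ = 0) :
    IsGDerWith t (f₁ + g₁) (f₂ + g₂) (f₃ + g₃) f' := by
  intro x y z
  have hg := hs.slot_sum_eq_left g₁ h₂ h₃ x y z
  rw [hsum, LinearMap.zero_apply, hs.zero_left] at hg
  simp only [LinearMap.add_apply, hs.add_left, hs.add_mid, hs.add_right, ← hf x y z]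
  linear_combination (norm := abel) hg

end IsSymmTrilinear

section

variable {F : Type*} [Field F] {A : Type*} [AddCommGroup A] [Module F A] {t : A → A → A → A}

theorem IsGDerWith.swap23 (hs : IsSymmTrilinear F t) {f₁ f₂ f₃ f' : A →ₗ[F] A}
    (hf : IsGDerWith t f₁ f₂ f₃ f') : IsGDerWith t f₁ f₃ f₂ f' := by
  intro x y z
  rw [hs.symm23 (f₁ x), hs.symm23 x (f₃ y), hs.symm23 x y (f₂ z), hs.symm23 x y z, ← hf x z y]
  abel

/-- Comparing the identity at `(x, y, z)` and at `(y, x, z)`. -/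
theorem IsGDerWith.sub_mem_quasicentroid (hs : IsSymmTrilinear F t) {f₁ f₂ f₃ f' : A →ₗ[F] A}
    (hf : IsGDerWith t f₁ f₂ f₃ f') : f₁ - f₂ ∈ hs.quasicentroid := by
  refine hs.isQCent_iff.2 fun x y z => ?_
  have hyx := hf y x z
  rw [hs.symm12 (f₁ y), hs.symm12 y (f₂ x), hs.symm12 y x, hs.symm12 y x] at hyx
  rw [LinearMap.sub_apply, LinearMap.sub_apply, hs.sub_left, hs.sub_mid,
    sub_eq_sub_iff_add_eq_add]
  exact add_right_cancel ((hf x y z).trans hyx.symm)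

end

open IsSymmTrilinear in
theorem stmt8_general {F : Type*} [Field F] {A : Type*} [AddCommGroup A] [Module F A]
    (h3 : (3 : F) ≠ 0)
    (t : A → A → A → A) (ht : IsTernaryJordan F t) :
    ∀ f : A →ₗ[F] A, IsGDer F t f ↔
      ∃ q h : A →ₗ[F] A, IsQDer F t q ∧ IsQCent F t h ∧ f = q + h := by
  have hs := ht.isSymmTrilinear
  intro f
  constructor
  · rintro ⟨f₂, f₃, f', hf : IsGDerWith t f f₂ f₃ f'⟩
    have hd₂ := hf.sub_mem_quasicentroid hs
    have hd₃ := (hf.swap23 hs).sub_mem_quasicentroid hs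
    set h := (3 : F)⁻¹ • ((f - f₂) + (f - f₃))
    have hh : h ∈ hs.quasicentroid := Submodule.smul_mem _ _ (add_mem hd₂ hd₃)
    have hsum : -h + (f - f₂ - h) + (f - f₃ - h) = 0 := by
      simp only [h]
      match_scalars <;> field_simp <;> ring
    have hq := hs.isGDerWith_add hf (sub_mem hd₂ hh) (sub_mem hd₃ hh) hsum
    refine ⟨f - h, h, ⟨f', ?_⟩, hh, by abel⟩
    show IsGDerWith t (f - h) (f - h) (f - h) f'
    convert hq using 2 <;> abel
  · rintro ⟨q, h, ⟨f', hq⟩, hh, rfl⟩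
    refine ⟨q - h, q, f', ?_⟩
    have hg := hs.isGDerWith_add hq (g₁ := h) (neg_mem hh) (zero_mem _) (by abel)
    rwa [← sub_eq_add_neg, add_zero] at hg

/-- `GDer(A) = QDer(A) + QΓ(A)`. -/
theorem stmt8 {F : Type*} [Field F] {A : Type*} [AddCommGroup A] [Module F A]
    (h2 : (2 : F) ≠ 0) (h3 : (3 : F) ≠ 0)
    (t : A → A → A → A) (ht : IsTernaryJordan F t) :
    ∀ f : A →ₗ[F] A, IsGDer F t f ↔
      ∃ q h : A →ₗ[F] A, IsQDer F t q ∧ IsQCent F t h ∧ f = q + h :=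
  stmt8_general h3 t ht
end

section
/- Let A be a ternary Jordan algebra over a field F with char F ≠ 2, 3. Then QΓ(A) is an ideal of the Lie algebra GDer(A): [f,g] = f∘g − g∘f ∈ QΓ(A) for all f ∈ QΓ(A) and g ∈ GDer(A). Moreover, if Z(A) = {0}, then QΓ(A) is an abelian ideal of GDer(A) ([f,g] = 0 for all f,g ∈ QΓ(A)). -/
/-!
For `f ∈ QΓ(A)` and a generalized derivation `(g, g₂, g₃, g')`, expanding `t (g ·) · ·` by the
defining identity of `g` and moving `f` freely between slots shows that `t ([f, g] x) y z` equals
`t x (f y) (g₃ z) - t x y (g₃ (f z))`, which is symmetric in `x` and `y`; by total symmetry this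
makes `[f, g]` quasicentral. For `f, g ∈ QΓ(A)` the same slot-shuffling gives
`t x y (f (g w)) = t x y (g (f w))`, so `[f, g]` takes values in the annihilator.
-/

structure IsSymmAdditive {A : Type*} [AddCommGroup A] (t : A → A → A → A) : Prop where
  add_left : ∀ x y z w : A, t (x + y) z w = t x z w + t y z w
  symm12 : ∀ x y z : A, t x y z = t y x z
  symm23 : ∀ x y z : A, t x y z = t x z y

theorem IsTernaryJordan.isSymmAdditive {F : Type*} [Field F] {A : Type*} [AddCommGroup A]
    [Module F A] {t : A → A → A → A} (ht : IsTernaryJordan F t) : IsSymmAdditive t :=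
  ⟨ht.add_left, ht.symm12, ht.symm23⟩

namespace IsSymmAdditive

variable {A : Type*} [AddCommGroup A] {t : A → A → A → A}

theorem sub_left (ht : IsSymmAdditive t) (u v y z : A) :
    t (u - v) y z = t u y z - t v y z :=
  (AddMonoidHom.mk' (t · y z) fun a b => ht.add_left a b y z).map_sub u v

theorem sub_right (ht : IsSymmAdditive t) (x y u v : A) :
    t x y (u - v) = t x y u - t x y v := by
  simp only [ht.symm23 x y, ht.symm12 x, ht.sub_left]

end IsSymmAdditive

namespace IsQCent

variable {F : Type*} [Field F] {A : Type*} [AddCommGroup A] [Module F A]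
  {t : A → A → A → A} {f g : A →ₗ[F] A}

theorem left_eq_right (hf : IsQCent F t f) (x y z : A) : t (f x) y z = t x y (f z) :=
  (hf x y z).1.trans (hf x y z).2

theorem of_left_eq_mid (ht : IsSymmAdditive t) (H : ∀ x y z, t (f x) y z = t x (f y) z) :
    IsQCent F t f := by
  refine fun x y z => ⟨H x y z, ?_⟩
  calc t x (f y) z = t (f y) z x := by rw [ht.symm12, ht.symm23]
    _ = t y (f z) x := H y z x
    _ = t x y (f z) := by rw [ht.symm23, ht.symm12]

theorem comp_sub_comp_left_of_gder (hf : IsQCent F t f) {g₂ g₃ g' : A →ₗ[F] A}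
    (hg : ∀ x y z, t (g x) y z + t x (g₂ y) z + t x y (g₃ z) = g' (t x y z)) (x y z : A) :
    t (f (g x)) y z - t (g (f x)) y z = t x (f y) (g₃ z) - t x y (g₃ (f z)) := by
  have hg' : ∀ a b c, t (g a) b c = g' (t a b c) - t a (g₂ b) c - t a b (g₃ c) := fun a b c => by
    rw [← hg a b c]; abel
  rw [hf.left_eq_right, hg', hg', hf.left_eq_right x y z, hf.left_eq_right x (g₂ y) z,
    (hf x y (g₃ z)).1]
  abel

theorem lie_gder (hf : IsQCent F t f) (ht : IsSymmAdditive t) (hg : IsGDer F t g) :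
    IsQCent F t (f ∘ₗ g - g ∘ₗ f) := by
  obtain ⟨g₂, g₃, g', hg⟩ := hg
  refine of_left_eq_mid ht fun x y z => ?_
  simp only [LinearMap.sub_apply, LinearMap.comp_apply]
  rw [ht.symm12 x, ht.sub_left, ht.sub_left, hf.comp_sub_comp_left_of_gder hg,
    hf.comp_sub_comp_left_of_gder hg, ← (hf x y _).1, ht.symm12 y (f x), ht.symm12 y x]

theorem tmul_comp_comm (hf : IsQCent F t f) (hg : IsQCent F t g) (x y w : A) :
    t x y (f (g w)) = t x y (g (f w)) :=
  calc t x y (f (g w))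
      = t (g x) (f y) w := by rw [← (hf x y _).2, hg.left_eq_right]
    _ = t x y (g (f w)) := by rw [(hf _ y w).2, (hg x y _).1, (hg x y _).2]

theorem comp_sub_comp_eq_zero (hf : IsQCent F t f) (hg : IsQCent F t g) (ht : IsSymmAdditive t)
    (hZ : ∀ z : A, (∀ x y : A, t x y z = 0) → z = 0) : f ∘ₗ g - g ∘ₗ f = 0 := by
  ext w
  refine hZ _ fun x y => ?_
  rw [LinearMap.sub_apply, ht.sub_right, sub_eq_zero]
  exact hf.tmul_comp_comm hg x y w

end IsQCent

theorem stmt9_general {F : Type*} [Field F] {A : Type*} [AddCommGroup A] [Module F A]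
    (t : A → A → A → A) (ht : IsTernaryJordan F t) :
    (∀ f g : A →ₗ[F] A, IsQCent F t f → IsGDer F t g →
      IsQCent F t (f ∘ₗ g - g ∘ₗ f)) ∧
    ((∀ z : A, (∀ x y : A, t x y z = 0) → z = 0) →
      ∀ f g : A →ₗ[F] A, IsQCent F t f → IsQCent F t g →
        f ∘ₗ g - g ∘ₗ f = 0) :=
  ⟨fun _ _ hf hg => hf.lie_gder ht.isSymmAdditive hg,
    fun hZ _ _ hf hg => hf.comp_sub_comp_eq_zero hg ht.isSymmAdditive hZ⟩

/-- `QΓ(A)` is an ideal of the Lie algebra `GDer(A)`; if `Z(A) = 0`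
then it is an abelian ideal. -/
theorem stmt9 {F : Type*} [Field F] {A : Type*} [AddCommGroup A] [Module F A]
    (h2 : (2 : F) ≠ 0) (h3 : (3 : F) ≠ 0)
    (t : A → A → A → A) (ht : IsTernaryJordan F t) :
    (∀ f g : A →ₗ[F] A, IsQCent F t f → IsGDer F t g →
      IsQCent F t (f ∘ₗ g - g ∘ₗ f)) ∧
    ((∀ z : A, (∀ x y : A, t x y z = 0) → z = 0) →
      ∀ f g : A →ₗ[F] A, IsQCent F t f → IsQCent F t g →
        f ∘ₗ g - g ∘ₗ f = 0) :=
  stmt9_general t ht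
end

section
/- Let A be a ternary Jordan algebra over a field F with char F ≠ 2, 3. Then ZDer(A) = Γ(A) ∩ Der(A): a linear map f : A → A is a center derivation if and only if it is both an element of the centroid and a derivation. -/
/-- A derivation of the ternary algebra `(A, t)`. -/
def IsTDer (F : Type*) [Field F] {A : Type*} [AddCommGroup A] [Module F A]
    (t : A → A → A → A) (D : A →ₗ[F] A) : Prop :=
  ∀ x y z : A, D (t x y z) = t (D x) y z + t x (D y) z + t x y (D z)
namespace IsTernaryJordan

variable {F : Type*} [Field F] {A : Type*} [AddCommGroup A] [Module F A]
  {t : A → A → A → A}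

theorem rotate (ht : IsTernaryJordan F t) (x y z : A) : t x y z = t y z x := by
  rw [ht.symm12, ht.symm23]

theorem left_eq_zero_of_annihilates (ht : IsTernaryJordan F t) {f : A →ₗ[F] A}
    (hf : ∀ a x y : A, t x y (f a) = 0) (a x y : A) : t (f a) x y = 0 := by
  rw [ht.rotate]
  exact hf a x y

theorem middle_eq_zero_of_annihilates (ht : IsTernaryJordan F t) {f : A →ₗ[F] A}
    (hf : ∀ a x y : A, t x y (f a) = 0) (a x y : A) : t x (f a) y = 0 := by
  rw [ht.symm23]
  exact hf a x y

theorem isCent_of_annihilates (ht : IsTernaryJordan F t) {f : A →ₗ[F] A}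
    (hprod : ∀ x y z : A, f (t x y z) = 0) (hf : ∀ a x y : A, t x y (f a) = 0) :
    IsCent F t f := fun x y z =>
  ⟨by rw [ht.left_eq_zero_of_annihilates hf, ht.middle_eq_zero_of_annihilates hf],
    by rw [ht.middle_eq_zero_of_annihilates hf, hf],
    by rw [hf, hprod]⟩

theorem isTDer_of_annihilates (ht : IsTernaryJordan F t) {f : A →ₗ[F] A}
    (hprod : ∀ x y z : A, f (t x y z) = 0) (hf : ∀ a x y : A, t x y (f a) = 0) :
    IsTDer F t f := fun x y z => by
  rw [hprod, ht.left_eq_zero_of_annihilates hf, ht.middle_eq_zero_of_annihilates hf, hf,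
    add_zero, add_zero]

end IsTernaryJordan

/-- For `f` in the centroid, the derivation rule reads `f [[x,y,z]] = 3 f [[x,y,z]]`. -/
theorem map_eq_zero_of_isCent_of_isTDer {F : Type*} [Field F] {A : Type*} [AddCommGroup A]
    [Module F A] (h2 : (2 : F) ≠ 0) {t : A → A → A → A} {f : A →ₗ[F] A}
    (hc : IsCent F t f) (hd : IsTDer F t f) (x y z : A) : f (t x y z) = 0 := by
  obtain ⟨h₁, h₂, h₃⟩ := hc x y z
  have htriple : f (t x y z) = f (t x y z) + f (t x y z) + f (t x y z) := by
    simpa only [h₁, h₂, h₃] using hd x y z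
  have htwice : (2 : F) • f (t x y z) = 0 := by
    rw [two_smul]
    exact add_eq_right.mp htriple.symm
  exact (smul_eq_zero.mp htwice).resolve_left h2

theorem stmt12_general {F : Type*} [Field F] {A : Type*} [AddCommGroup A] [Module F A]
    (h2 : (2 : F) ≠ 0)
    (t : A → A → A → A) (ht : IsTernaryJordan F t) :
    ∀ f : A →ₗ[F] A,
      ((∀ x y z : A, f (t x y z) = 0) ∧ ∀ a x y : A, t x y (f a) = 0) ↔
        IsCent F t f ∧ IsTDer F t f := by
  intro f
  constructor
  · rintro ⟨hprod, hf⟩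
    exact ⟨ht.isCent_of_annihilates hprod hf, ht.isTDer_of_annihilates hprod hf⟩
  · rintro ⟨hc, hd⟩
    have hprod := map_eq_zero_of_isCent_of_isTDer h2 hc hd
    refine ⟨hprod, fun a x y => ?_⟩
    rw [(hc x y a).2.2, hprod]

/-- `ZDer(A) = Γ(A) ∩ Der(A)`. -/
theorem stmt12 {F : Type*} [Field F] {A : Type*} [AddCommGroup A] [Module F A]
    (h2 : (2 : F) ≠ 0) (h3 : (3 : F) ≠ 0)
    (t : A → A → A → A) (ht : IsTernaryJordan F t) :
    ∀ f : A →ₗ[F] A,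
      ((∀ x y z : A, f (t x y z) = 0) ∧ ∀ a x y : A, t x y (f a) = 0) ↔
        IsCent F t f ∧ IsTDer F t f :=
  stmt12_general h2 t ht
end

section
/- Let A be a ternary Jordan algebra over a field F with char F ≠ 2. Let φ : A⊗A⊗A → A be the linear map determined by φ(x⊗y⊗z) = [[x,y,z]], and for a linear map D : A → A let D* : A⊗A⊗A → A⊗A⊗A be the linear map determined by D*(x⊗y⊗z) = D(x)⊗y⊗z + x⊗D(y)⊗z + x⊗y⊗D(z). Then D is a quasiderivation of A if and only if D*(Ker φ) ⊆ Ker φ. -/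
open scoped TensorProduct

/-!
Both conditions say that `φ ∘ D*` factors through `φ`: a quasiderivation `D` with partner `D'`
is exactly a linear map with `D' ∘ φ = φ ∘ D*`, checked on pure tensors. Over a field such a
factorisation exists iff `ker φ ≤ ker (φ ∘ D*)`, since `φ ∘ D*` descends to
`(A ⊗ A ⊗ A) ⧸ ker φ ≅ range φ` and any linear map on the subspace `range φ` extends to `A`.
-/

theorem LinearMap.exists_comp_eq_iff_ker_le {K V W U : Type*} [DivisionRing K]
    [AddCommGroup V] [Module K V] [AddCommGroup W] [Module K W] [AddCommGroup U] [Module K U]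
    (φ : V →ₗ[K] W) (g : V →ₗ[K] U) :
    (∃ f : W →ₗ[K] U, f ∘ₗ φ = g) ↔ LinearMap.ker φ ≤ LinearMap.ker g := by
  constructor
  · rintro ⟨f, rfl⟩
    exact LinearMap.ker_le_ker_comp φ f
  · intro hker
    obtain ⟨f, hf⟩ := LinearMap.exists_extend
      ((LinearMap.ker φ).liftQ g hker ∘ₗ φ.quotKerEquivRange.symm.toLinearMap)
    refine ⟨f, LinearMap.ext fun v => ?_⟩
    simpa [LinearMap.quotKerEquivRange_symm_apply_image] using
      LinearMap.congr_fun hf ⟨φ v, LinearMap.mem_range_self φ v⟩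

theorem isQDer_iff_exists_comp_eq {F A : Type*} [Field F] [AddCommGroup A] [Module F A]
    (t : A → A → A → A) (φ : A ⊗[F] (A ⊗[F] A) →ₗ[F] A)
    (hφ : ∀ x y z : A, φ (x ⊗ₜ[F] (y ⊗ₜ[F] z)) = t x y z)
    (D : A →ₗ[F] A) (Dstar : A ⊗[F] (A ⊗[F] A) →ₗ[F] A ⊗[F] (A ⊗[F] A))
    (hD : ∀ x y z : A, Dstar (x ⊗ₜ[F] (y ⊗ₜ[F] z)) =
      D x ⊗ₜ[F] (y ⊗ₜ[F] z) + x ⊗ₜ[F] (D y ⊗ₜ[F] z) + x ⊗ₜ[F] (y ⊗ₜ[F] D z)) :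
    IsQDer F t D ↔ ∃ D' : A →ₗ[F] A, D' ∘ₗ φ = φ ∘ₗ Dstar := by
  have hφD : ∀ x y z : A, φ (Dstar (x ⊗ₜ[F] (y ⊗ₜ[F] z))) =
      t (D x) y z + t x (D y) z + t x y (D z) := by
    intro x y z
    simp only [hD, map_add, hφ]
  refine exists_congr fun D' => ⟨fun h => ?_, fun h x y z => ?_⟩
  · refine TensorProduct.ext_threefold' fun x y z => ?_
    simp only [LinearMap.comp_apply, hφ, hφD, h]
  · simpa only [LinearMap.comp_apply, hφ, hφD] using
      (LinearMap.congr_fun h (x ⊗ₜ (y ⊗ₜ z))).symm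

theorem stmt14_general {F : Type*} [Field F] {A : Type*} [AddCommGroup A] [Module F A]
    (t : A → A → A → A)
    (φ : A ⊗[F] (A ⊗[F] A) →ₗ[F] A)
    (hφ : ∀ x y z : A, φ (x ⊗ₜ[F] (y ⊗ₜ[F] z)) = t x y z)
    (D : A →ₗ[F] A)
    (Dstar : A ⊗[F] (A ⊗[F] A) →ₗ[F] A ⊗[F] (A ⊗[F] A))
    (hD : ∀ x y z : A, Dstar (x ⊗ₜ[F] (y ⊗ₜ[F] z)) =
      D x ⊗ₜ[F] (y ⊗ₜ[F] z) + x ⊗ₜ[F] (D y ⊗ₜ[F] z) + x ⊗ₜ[F] (y ⊗ₜ[F] D z)) :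
    IsQDer F t D ↔ ∀ w ∈ LinearMap.ker φ, Dstar w ∈ LinearMap.ker φ := by
  rw [isQDer_iff_exists_comp_eq t φ hφ D Dstar hD, LinearMap.exists_comp_eq_iff_ker_le]
  rfl

/-- `D` is a quasiderivation iff `D*` preserves the kernel of the
multiplication map `φ : A⊗A⊗A → A`. -/
theorem stmt14 {F : Type*} [Field F] {A : Type*} [AddCommGroup A] [Module F A]
    (h2 : (2 : F) ≠ 0)
    (t : A → A → A → A) (ht : IsTernaryJordan F t)
    (φ : A ⊗[F] (A ⊗[F] A) →ₗ[F] A)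
    (hφ : ∀ x y z : A, φ (x ⊗ₜ[F] (y ⊗ₜ[F] z)) = t x y z)
    (D : A →ₗ[F] A)
    (Dstar : A ⊗[F] (A ⊗[F] A) →ₗ[F] A ⊗[F] (A ⊗[F] A))
    (hD : ∀ x y z : A, Dstar (x ⊗ₜ[F] (y ⊗ₜ[F] z)) =
      D x ⊗ₜ[F] (y ⊗ₜ[F] z) + x ⊗ₜ[F] (D y ⊗ₜ[F] z) + x ⊗ₜ[F] (y ⊗ₜ[F] D z)) :
    IsQDer F t D ↔ ∀ w ∈ LinearMap.ker φ, Dstar w ∈ LinearMap.ker φ :=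
  stmt14_general t φ hφ D Dstar hD
end

section
/- Let A be a ternary Jordan algebra over a field F such that there do not exist nonzero ideals I, J of A with [[x,u,v]] = 0 for all x ∈ A, u ∈ I, v ∈ J. Then the centroid Γ(A) has no zero divisors: for ψ, φ ∈ Γ(A), if ψ∘φ = 0 then ψ = 0 or φ = 0 (hence Γ(A), which contains the identity map, is an integral domain). -/
/-! If `ψ ∘ φ = 0` for centroid elements `ψ, φ`, their ranges are ideals, and
`[[x, ψ a, φ b]] = ψ (φ [[x, a, b]]) = 0`; so one of the ranges is zero. -/

namespace IsCent

variable {F : Type*} [Field F] {A : Type*} [AddCommGroup A] [Module F A]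
  {t : A → A → A → A} {f : A →ₗ[F] A}

theorem apply_left (hf : IsCent F t f) (x y z : A) : t (f x) y z = f (t x y z) :=
  ((hf x y z).1.trans (hf x y z).2.1).trans (hf x y z).2.2

theorem apply_mid (hf : IsCent F t f) (x y z : A) : t x (f y) z = f (t x y z) :=
  (hf x y z).2.1.trans (hf x y z).2.2

theorem apply_right (hf : IsCent F t f) (x y z : A) : t x y (f z) = f (t x y z) :=
  (hf x y z).2.2

theorem mul_mem_range (hf : IsCent F t f) {a : A} (ha : a ∈ LinearMap.range f) (x y : A) :
    t a x y ∈ LinearMap.range f := by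
  obtain ⟨b, rfl⟩ := ha
  exact ⟨t b x y, (hf.apply_left b x y).symm⟩

theorem mul_range_range_eq_zero {ψ φ : A →ₗ[F] A} (hψ : IsCent F t ψ) (hφ : IsCent F t φ)
    (hcomp : ψ ∘ₗ φ = 0) (x : A) {u v : A} (hu : u ∈ LinearMap.range ψ)
    (hv : v ∈ LinearMap.range φ) : t x u v = 0 := by
  obtain ⟨a, rfl⟩ := hu
  obtain ⟨b, rfl⟩ := hv
  rw [hψ.apply_mid, hφ.apply_right, ← LinearMap.comp_apply, hcomp, LinearMap.zero_apply]

end IsCent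

theorem stmt16_general {F : Type*} [Field F] {A : Type*} [AddCommGroup A] [Module F A]
    (t : A → A → A → A)
    (h : ¬ ∃ I J : Submodule F A, I ≠ ⊥ ∧ J ≠ ⊥ ∧
      (∀ a ∈ I, ∀ x y : A, t a x y ∈ I) ∧
      (∀ a ∈ J, ∀ x y : A, t a x y ∈ J) ∧
      ∀ (x : A), ∀ u ∈ I, ∀ v ∈ J, t x u v = 0) :
    ∀ ψ φ : A →ₗ[F] A, IsCent F t ψ → IsCent F t φ → ψ ∘ₗ φ = 0 →
      ψ = 0 ∨ φ = 0 := by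
  intro ψ φ hψ hφ hcomp
  by_contra! hne
  exact h ⟨LinearMap.range ψ, LinearMap.range φ,
    LinearMap.range_eq_bot.not.mpr hne.1, LinearMap.range_eq_bot.not.mpr hne.2,
    fun _ ha => hψ.mul_mem_range ha, fun _ ha => hφ.mul_mem_range ha,
    fun x _ hu _ hv => hψ.mul_range_range_eq_zero hφ hcomp x hu hv⟩

/-- if `A` has no nonzero ideals `I, J` with `[[A,I,J]] = 0`, then the
centroid has no zero divisors. -/
theorem stmt16 {F : Type*} [Field F] {A : Type*} [AddCommGroup A] [Module F A]
    (t : A → A → A → A) (ht : IsTernaryJordan F t)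
    (h : ¬ ∃ I J : Submodule F A, I ≠ ⊥ ∧ J ≠ ⊥ ∧
      (∀ a ∈ I, ∀ x y : A, t a x y ∈ I) ∧
      (∀ a ∈ J, ∀ x y : A, t a x y ∈ J) ∧
      ∀ (x : A), ∀ u ∈ I, ∀ v ∈ J, t x u v = 0) :
    ∀ ψ φ : A →ₗ[F] A, IsCent F t ψ → IsCent F t φ → ψ ∘ₗ φ = 0 →
      ψ = 0 ∨ φ = 0 :=
  stmt16_general t h
end

section
/- Let A be a finite-dimensional simple ternary Jordan algebra over an algebraically closed field F. Then Γ(A) = F·id: every element of the centroid of A is a scalar multiple of the identity map. -/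
section Centroid

variable {F : Type*} [Field F] {A : Type*} [AddCommGroup A] [Module F A]
  {t : A → A → A → A} {f : A →ₗ[F] A}

theorem IsCent.map_eq_left (hf : IsCent F t f) (x y z : A) :
    f (t x y z) = t (f x) y z :=
  ((hf x y z).1.trans ((hf x y z).2.1.trans (hf x y z).2.2)).symm

theorem IsCent.mem_eigenspace_left (hf : IsCent F t f)
    (hsmul : ∀ (c : F) (x y z : A), t (c • x) y z = c • t x y z) {c : F} {a : A}
    (ha : a ∈ Module.End.eigenspace (f : Module.End F A) c) (x y : A) :
    t a x y ∈ Module.End.eigenspace (f : Module.End F A) c := by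
  rw [Module.End.mem_eigenspace_iff] at ha ⊢
  rw [hf.map_eq_left, ha, hsmul]

end Centroid

theorem Module.End.eq_smul_id_of_eigenspace_eq_top {R M : Type*} [CommRing R]
    [AddCommGroup M] [Module R M] {f : Module.End R M} {c : R}
    (h : f.eigenspace c = ⊤) : f = c • LinearMap.id := by
  rwa [Module.End.eigenspace_def, LinearMap.ker_eq_top, sub_eq_zero] at h

/-- the centroid of a finite-dimensional simple ternary Jordan algebra
over an algebraically closed field consists of the scalar multiples of the
identity. -/
theorem stmt17 {F : Type*} [Field F] [IsAlgClosed F] {A : Type*} [AddCommGroup A]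
    [Module F A] [FiniteDimensional F A]
    (t : A → A → A → A) (ht : IsTernaryJordan F t)
    (hnz : ∃ x y z : A, t x y z ≠ 0)
    (hsimple : ∀ I : Submodule F A, (∀ a ∈ I, ∀ x y : A, t a x y ∈ I) →
      I = ⊥ ∨ I = ⊤) :
    ∀ f : A →ₗ[F] A, IsCent F t f →
      ∃ c : F, f = c • (LinearMap.id : A →ₗ[F] A) := by
  intro f hf
  obtain ⟨x, y, z, hxyz⟩ := hnz
  have : Nontrivial A := ⟨t x y z, 0, hxyz⟩
  obtain ⟨c, hc⟩ := Module.End.exists_eigenvalue (f : Module.End F A)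
  refine ⟨c, Module.End.eq_smul_id_of_eigenspace_eq_top ?_⟩
  exact (hsimple _ fun a ha => hf.mem_eigenspace_left ht.smul_left ha).resolve_left hc
end

section
/- Let A be a ternary Jordan algebra over a field F. Then A is indecomposable (A cannot be written as A = A₁ ⊕ A₂ with A₁, A₂ nonzero ideals, A₁ ∩ A₂ = {0}, A₁ + A₂ = A) if and only if the centroid Γ(A) contains no idempotents except 0 and the identity map (i.e. ψ ∈ Γ(A) with ψ∘ψ = ψ implies ψ = 0 or ψ = id). -/
theorem LinearMap.IsIdempotentElem.ker_eq_bot_iff {R M : Type*} [Ring R] [AddCommGroup M]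
    [Module R M] {f : M →ₗ[R] M} (hf : IsIdempotentElem f) : ker f = ⊥ ↔ f = id := by
  rw [ker_eq_range hf, range_eq_bot, sub_eq_zero, eq_comm]

section TernaryIdeals

variable {F : Type*} [Field F] {A : Type*} [AddCommGroup A] [Module F A]
  {t : A → A → A → A}

variable (t) in
def IsTernaryIdeal (I : Submodule F A) : Prop :=
  ∀ a ∈ I, ∀ x y : A, t a x y ∈ I

theorem IsTernaryJordan.zero_left (ht : IsTernaryJordan F t) (y z : A) : t 0 y z = 0 := by
  simpa using ht.smul_left 0 0 y z

theorem IsCent.map_left {f : A →ₗ[F] A} (hf : IsCent F t f) (x y z : A) :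
    t (f x) y z = f (t x y z) :=
  (hf x y z).1.trans <| (hf x y z).2.1.trans (hf x y z).2.2

theorem IsTernaryJordan.isCent_of_map_left (ht : IsTernaryJordan F t) {f : A →ₗ[F] A}
    (hf : ∀ x y z : A, t (f x) y z = f (t x y z)) : IsCent F t f := by
  have h₂ (x y z : A) : t x (f y) z = f (t x y z) := by rw [ht.symm12, hf, ht.symm12]
  have h₃ (x y z : A) : t x y (f z) = f (t x y z) := by rw [ht.symm23, h₂, ht.symm23]
  exact fun x y z =>
    ⟨(hf x y z).trans (h₂ x y z).symm, (h₂ x y z).trans (h₃ x y z).symm, h₃ x y z⟩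

theorem IsCent.isTernaryIdeal_range {f : A →ₗ[F] A} (hf : IsCent F t f) :
    IsTernaryIdeal t (LinearMap.range f) := by
  rintro _ ⟨a, rfl⟩ x y
  exact ⟨t a x y, (hf.map_left a x y).symm⟩

theorem IsCent.isTernaryIdeal_ker (ht : IsTernaryJordan F t) {f : A →ₗ[F] A}
    (hf : IsCent F t f) : IsTernaryIdeal t (LinearMap.ker f) := by
  intro a ha x y
  rw [LinearMap.mem_ker] at ha ⊢
  rw [← hf.map_left, ha, ht.zero_left]

theorem IsTernaryJordan.isCent_projection (ht : IsTernaryJordan F t) {I J : Submodule F A}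
    (hI : IsTernaryIdeal t I) (hJ : IsTernaryIdeal t J) (hIJ : IsCompl I J) :
    IsCent F t (I.projection J hIJ) := by
  refine ht.isCent_of_map_left fun x y z => ?_
  have hsplit : t x y z = t (I.projection J hIJ x) y z + t (x - I.projection J hIJ x) y z := by
    rw [← ht.add_left, add_sub_cancel]
  rw [hsplit, map_add,
    Submodule.projection_apply_of_mem_left hIJ (hI _ (Submodule.projection_apply_mem hIJ x) y z),
    Submodule.projection_apply_of_mem_right hIJ (hJ _ (Submodule.sub_projection_mem hIJ x) y z),
    add_zero]

end TernaryIdeals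

/-- `A` is indecomposable iff the only idempotents in its centroid are
`0` and the identity. -/
theorem stmt18 {F : Type*} [Field F] {A : Type*} [AddCommGroup A] [Module F A]
    (t : A → A → A → A) (ht : IsTernaryJordan F t) :
    (¬ ∃ A₁ A₂ : Submodule F A, A₁ ≠ ⊥ ∧ A₂ ≠ ⊥ ∧
        (∀ a ∈ A₁, ∀ x y : A, t a x y ∈ A₁) ∧
        (∀ a ∈ A₂, ∀ x y : A, t a x y ∈ A₂) ∧
        A₁ ⊓ A₂ = ⊥ ∧ A₁ ⊔ A₂ = ⊤) ↔
      ∀ ψ : A →ₗ[F] A, IsCent F t ψ → ψ ∘ₗ ψ = ψ →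
        ψ = 0 ∨ ψ = LinearMap.id := by
  constructor
  · intro hIndec ψ hψ hidem
    have hproj : IsIdempotentElem ψ := hidem
    have hcompl := LinearMap.IsIdempotentElem.isCompl hproj
    by_contra! hψ_ne
    exact hIndec ⟨_, _, LinearMap.range_eq_bot.not.mpr hψ_ne.1,
      (LinearMap.IsIdempotentElem.ker_eq_bot_iff hproj).not.mpr hψ_ne.2, hψ.isTernaryIdeal_range,
      hψ.isTernaryIdeal_ker ht, hcompl.inf_eq_bot, hcompl.sup_eq_top⟩
  · rintro hidem ⟨I, J, hI, hJ, hIideal, hJideal, hinf, hsup⟩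
    have hIJ : IsCompl I J := ⟨disjoint_iff.mpr hinf, codisjoint_iff.mpr hsup⟩
    rcases hidem _ (ht.isCent_projection hIideal hJideal hIJ)
        (Submodule.isIdempotentElem_projection hIJ) with h | h
    · exact hI (by rw [← Submodule.range_projection hIJ, h, LinearMap.range_zero])
    · exact hJ (by rw [← Submodule.ker_projection hIJ, h, LinearMap.ker_id])
end
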